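/- arXiv:1502.07584 — 5 statements merged into one kernel-verified Lean document; each statement's English description precedes it below -/
import Mathlib

section
/- Let f : U → V and g : V → W be linear maps of finite-dimensional real inner product spaces such that f is surjective and g is injective. Then det⊥(g ∘ f) = det⊥(f) · det⊥(g). -/
/-- `det⊥(f)`: for a linear map `f : V → W` of finite-dimensional real inner product
spaces, `detPerp f = 1` if `f = 0`, and otherwise it is the square root of the determinant
of the endomorphism of the orthogonal complement of `ker (f* ∘ f)` induced by `f* ∘ f`. -/
noncomputable def detPerp {V W : Type*} [NormedAddCommGroup V] [InnerProductSpace ℝ V]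
    [NormedAddCommGroup W] [InnerProductSpace ℝ W]
    [FiniteDimensional ℝ V] [FiniteDimensional ℝ W] (f : V →ₗ[ℝ] W) : ℝ :=
  letI := Classical.propDecidable (f = 0)
  if f = 0 then 1
  else Real.sqrt (LinearMap.det
    ((Submodule.orthogonalProjectionOnto (LinearMap.ker (LinearMap.adjoint f ∘ₗ f))ᗮ).toLinearMap
      ∘ₗ (LinearMap.adjoint f ∘ₗ f)
      ∘ₗ (LinearMap.ker (LinearMap.adjoint f ∘ₗ f))ᗮ.subtype))

/-!
`det⊥(f)` is the norm determinant `LinearMap.normDet` of the restriction of `f` to `(ker f)ᗮ`,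
i.e. the volume factor of `f` on the orthogonal complement of its kernel. For `f` surjective and
`g` injective, `g ∘ f` has the same kernel as `f`, and its restriction to `(ker f)ᗮ` is `g`
composed with the isomorphism `(ker f)ᗮ ≃ V` induced by `f`; volume factors multiply along such
a composition.
-/

open LinearMap Module Submodule

section

variable {E F : Type*} [NormedAddCommGroup E] [InnerProductSpace ℝ E] [FiniteDimensional ℝ E]
  [NormedAddCommGroup F] [InnerProductSpace ℝ F] [FiniteDimensional ℝ F]

theorem Submodule.adjoint_subtype (K : Submodule ℝ E) :
    adjoint K.subtype = K.orthogonalProjectionOnto.toLinearMap := by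
  rw [adjoint_eq_toCLM_adjoint, ← adjoint_subtypeL]
  rfl

theorem detPerp_eq_normDet_domRestrict (f : E →ₗ[ℝ] F) :
    detPerp f = (f.domRestrict (ker f)ᗮ).normDet := by
  by_cases hf : f = 0
  · subst hf
    have : Subsingleton (ker (0 : E →ₗ[ℝ] F))ᗮ := by
      rw [ker_zero, top_orthogonal_eq_bot]
      infer_instance
    rw [detPerp, if_pos rfl, normDet_of_subsingleton]
  · rw [detPerp, if_neg hf, ← Real.sqrt_sq (normDet_nonneg _), ← adjoint_subtype]
    congr 1
    -- `ker (f† ∘ f)` can be rewritten only now: the projection's instance depended on it.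
    have hsq := (f.domRestrict (ker f)ᗮ).normDet_sq
    rw [domRestrict, adjoint_comp] at hsq
    rw [ker_adjoint_comp_self]
    exact hsq.symm

theorem detPerp_eq_normDet_of_injective {f : E →ₗ[ℝ] F} (hf : Function.Injective f) :
    detPerp f = f.normDet := by
  have hrank : finrank ℝ (ker f)ᗮ = finrank ℝ E := by
    rw [ker_eq_bot.2 hf, bot_orthogonal_eq_top, finrank_top]
  rw [detPerp_eq_normDet_domRestrict, domRestrict, normDet_comp_of_finrank_eq _ _ hrank,
    normDet_subtype, mul_one]

theorem finrank_orthogonal_ker_of_surjective {f : E →ₗ[ℝ] F} (hf : Function.Surjective f) :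
    finrank ℝ (ker f)ᗮ = finrank ℝ F := by
  rw [orthogonal_ker, finrank_range_adjoint, range_eq_top.2 hf, finrank_top]

end

/-- If `f : U → V` and `g : V → W` are linear maps of finite-dimensional real inner product
spaces such that `f` is surjective and `g` is injective, then
`det⊥(g ∘ f) = det⊥(f) · det⊥(g)`. -/
theorem detPerp_comp {U V W : Type*}
    [NormedAddCommGroup U] [InnerProductSpace ℝ U] [FiniteDimensional ℝ U]
    [NormedAddCommGroup V] [InnerProductSpace ℝ V] [FiniteDimensional ℝ V]
    [NormedAddCommGroup W] [InnerProductSpace ℝ W] [FiniteDimensional ℝ W]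
    (f : U →ₗ[ℝ] V) (g : V →ₗ[ℝ] W)
    (hf : Function.Surjective f) (hg : Function.Injective g) :
    detPerp (g ∘ₗ f) = detPerp f * detPerp g := by
  have hker : ker (g ∘ₗ f) = ker f := ker_comp_of_ker_eq_bot f (ker_eq_bot.2 hg)
  rw [detPerp_eq_normDet_domRestrict, hker, detPerp_eq_normDet_domRestrict f,
    detPerp_eq_normDet_of_injective hg, mul_comm]
  exact normDet_comp_of_finrank_eq (f.domRestrict _) g (finrank_orthogonal_ker_of_surjective hf)
end

section
/- Let f₁ : U₁ → V₁ and f₂ : U₂ → V₂ be linear maps of finite-dimensional real inner product spaces. Then det⊥(f₁ ⊕ f₂) = det⊥(f₁) · det⊥(f₂), where f₁ ⊕ f₂ : U₁ ⊕ U₂ → V₁ ⊕ V₂ is the direct sum map. -/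
open LinearMap
open scoped ComplexOrder ENNReal

section

variable {R M₁ M₂ N₁ N₂ : Type*} [CommRing R] [AddCommGroup M₁] [Module R M₁] [AddCommGroup M₂]
  [Module R M₂] [AddCommGroup N₁] [Module R N₁] [AddCommGroup N₂] [Module R N₂]

-- `rw` cannot change the submodule under `restrict`: the invariance proof depends on it.
theorem LinearMap.det_restrict_congr {T T' : M₁ →ₗ[R] M₁} {p p' : Submodule R M₁}
    (hT : T = T') (hp : p = p') (h : ∀ x ∈ p, T x ∈ p) (h' : ∀ x ∈ p', T' x ∈ p') :
    (T.restrict h).det = (T'.restrict h').det := by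
  subst hT hp
  rfl

theorem LinearMap.ker_withLpMap_prodMap (r : ℝ≥0∞) (f : M₁ →ₗ[R] N₁) (g : M₂ →ₗ[R] N₂) :
    ker (withLpMap r (f.prodMap g)) =
      ((ker f).prod (ker g)).comap (WithLp.linearEquiv r R (M₁ × M₂)).toLinearMap := by
  ext u
  simp [withLpMap, Prod.ext_iff]

end

theorem LinearMap.det_restrict_withLpMap_prodMap {K M₁ M₂ : Type*} [Field K]
    [AddCommGroup M₁] [Module K M₁] [FiniteDimensional K M₁]
    [AddCommGroup M₂] [Module K M₂] [FiniteDimensional K M₂] (r : ℝ≥0∞)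
    {T₁ : M₁ →ₗ[K] M₁} {T₂ : M₂ →ₗ[K] M₂} {p₁ : Submodule K M₁} {p₂ : Submodule K M₂}
    (h₁ : ∀ x ∈ p₁, T₁ x ∈ p₁) (h₂ : ∀ x ∈ p₂, T₂ x ∈ p₂)
    (h : ∀ x ∈ (p₁.prod p₂).comap (WithLp.linearEquiv r K (M₁ × M₂)).toLinearMap,
      withLpMap r (T₁.prodMap T₂) x ∈
        (p₁.prod p₂).comap (WithLp.linearEquiv r K (M₁ × M₂)).toLinearMap) :
    ((withLpMap r (T₁.prodMap T₂)).restrict h).det =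
      (T₁.restrict h₁).det * (T₂.restrict h₂).det := by
  let e : (p₁ × p₂) ≃ₗ[K] (p₁.prod p₂).comap (WithLp.linearEquiv r K (M₁ × M₂)).toLinearMap :=
    { toFun x := ⟨WithLp.toLp r (x.1, x.2), x.1.2, x.2.2⟩
      invFun u := (⟨u.1.ofLp.1, u.2.1⟩, ⟨u.1.ofLp.2, u.2.2⟩)
      map_add' _ _ := rfl
      map_smul' _ _ := rfl
      left_inv _ := rfl
      right_inv _ := rfl }
  have : (withLpMap r (T₁.prodMap T₂)).restrict h =
      e.toLinearMap ∘ₗ (T₁.restrict h₁).prodMap (T₂.restrict h₂) ∘ₗ e.symm.toLinearMap := rfl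
  rw [this, det_conj, det_prodMap]

section

variable {𝕜 E E₁ E₂ F₁ F₂ : Type*} [RCLike 𝕜]
  [NormedAddCommGroup E] [InnerProductSpace 𝕜 E]
  [NormedAddCommGroup E₁] [InnerProductSpace 𝕜 E₁]
  [NormedAddCommGroup E₂] [InnerProductSpace 𝕜 E₂]
  [NormedAddCommGroup F₁] [InnerProductSpace 𝕜 F₁]
  [NormedAddCommGroup F₂] [InnerProductSpace 𝕜 F₂]

theorem LinearMap.IsPositive.restrict_invariant {T : E →ₗ[𝕜] E} (hT : T.IsPositive)
    {V : Submodule 𝕜 E} (hV : ∀ v ∈ V, T v ∈ V) : (T.restrict hV).IsPositive :=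
  ⟨hT.isSymmetric.restrict_invariant hV, fun v => hT.2 v⟩

theorem LinearMap.IsPositive.det_nonneg [FiniteDimensional 𝕜 E] {T : E →ₗ[𝕜] E}
    (hT : T.IsPositive) : 0 ≤ T.det := by
  let b := stdOrthonormalBasis 𝕜 E
  rw [← det_toMatrix b.toBasis]
  exact ((posSemidef_toMatrix_iff b).2 hT).det_nonneg

theorem LinearMap.adjoint_comp_self_mem_orthogonal_ker [FiniteDimensional 𝕜 E₁]
    [FiniteDimensional 𝕜 F₁] (f : E₁ →ₗ[𝕜] F₁) (x : E₁) :
    (adjoint f ∘ₗ f) x ∈ (ker (adjoint f ∘ₗ f))ᗮ := by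
  rw [orthogonal_ker, adjoint_comp, adjoint_adjoint]
  exact mem_range_self _ x

theorem WithLp.orthogonal_comap_prod (p₁ : Submodule 𝕜 E₁) (p₂ : Submodule 𝕜 E₂) :
    ((p₁.prod p₂).comap (WithLp.linearEquiv 2 𝕜 (E₁ × E₂)).toLinearMap)ᗮ =
      (p₁ᗮ.prod p₂ᗮ).comap (WithLp.linearEquiv 2 𝕜 (E₁ × E₂)).toLinearMap := by
  ext u
  simp only [Submodule.mem_orthogonal, Submodule.mem_comap, Submodule.mem_prod,
    LinearEquiv.coe_coe, WithLp.coe_linearEquiv]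
  constructor
  · intro h
    exact ⟨fun v hv => by
        simpa [WithLp.prod_inner_apply] using h (WithLp.toLp 2 (v, 0)) ⟨hv, p₂.zero_mem⟩,
      fun v hv => by
        simpa [WithLp.prod_inner_apply] using h (WithLp.toLp 2 (0, v)) ⟨p₁.zero_mem, hv⟩⟩
  · rintro ⟨h₁, h₂⟩ v ⟨hv₁, hv₂⟩
    rw [WithLp.prod_inner_apply, h₁ _ hv₁, h₂ _ hv₂, add_zero]

theorem LinearMap.adjoint_withLpMap_prodMap [FiniteDimensional 𝕜 E₁] [FiniteDimensional 𝕜 E₂]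
    [FiniteDimensional 𝕜 F₁] [FiniteDimensional 𝕜 F₂] (f₁ : E₁ →ₗ[𝕜] F₁) (f₂ : E₂ →ₗ[𝕜] F₂) :
    adjoint (withLpMap 2 (f₁.prodMap f₂)) = withLpMap 2 ((adjoint f₁).prodMap (adjoint f₂)) := by
  refine ((eq_adjoint_iff _ _).2 fun x y => ?_).symm
  simp only [WithLp.prod_inner_apply, coe_withLpMap, WithLp.map, prodMap_apply, adjoint_inner_left]

end

theorem detPerp_eq_sqrt_det_restrict {V W : Type*} [NormedAddCommGroup V] [InnerProductSpace ℝ V]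
    [NormedAddCommGroup W] [InnerProductSpace ℝ W] [FiniteDimensional ℝ V] [FiniteDimensional ℝ W]
    (f : V →ₗ[ℝ] W) :
    detPerp f =
      √((adjoint f ∘ₗ f).restrict fun x _ => adjoint_comp_self_mem_orthogonal_ker f x).det := by
  unfold detPerp
  split_ifs with hf
  · subst hf
    have hK : (ker (adjoint (0 : V →ₗ[ℝ] W) ∘ₗ (0 : V →ₗ[ℝ] W)))ᗮ = ⊥ := by simp
    have : Subsingleton (ker (adjoint (0 : V →ₗ[ℝ] W) ∘ₗ (0 : V →ₗ[ℝ] W)))ᗮ := hK ▸ inferInstance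
    rw [det_eq_one_of_subsingleton, Real.sqrt_one]
  · congr 2
    ext x
    exact congrArg Subtype.val (Submodule.orthogonalProjectionOnto_mem_subspace_eq_self
      ⟨_, adjoint_comp_self_mem_orthogonal_ker f x⟩)

/-- For linear maps `f₁ : U₁ → V₁` and `f₂ : U₂ → V₂` of finite-dimensional real inner
product spaces, the direct sum map `f₁ ⊕ f₂ : U₁ ⊕ U₂ → V₁ ⊕ V₂` (orthogonal direct sums,
i.e. `L²`-products) satisfies `det⊥(f₁ ⊕ f₂) = det⊥(f₁) · det⊥(f₂)`. -/
theorem detPerp_directSum {U₁ U₂ V₁ V₂ : Type*}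
    [NormedAddCommGroup U₁] [InnerProductSpace ℝ U₁] [FiniteDimensional ℝ U₁]
    [NormedAddCommGroup U₂] [InnerProductSpace ℝ U₂] [FiniteDimensional ℝ U₂]
    [NormedAddCommGroup V₁] [InnerProductSpace ℝ V₁] [FiniteDimensional ℝ V₁]
    [NormedAddCommGroup V₂] [InnerProductSpace ℝ V₂] [FiniteDimensional ℝ V₂]
    (f₁ : U₁ →ₗ[ℝ] V₁) (f₂ : U₂ →ₗ[ℝ] V₂)
    (F : WithLp 2 (U₁ × U₂) →ₗ[ℝ] WithLp 2 (V₁ × V₂))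
    (hF : ∀ u : WithLp 2 (U₁ × U₂),
      (WithLp.linearEquiv 2 ℝ (V₁ × V₂)) (F u) =
        (f₁ ((WithLp.linearEquiv 2 ℝ (U₁ × U₂)) u).1,
         f₂ ((WithLp.linearEquiv 2 ℝ (U₁ × U₂)) u).2)) :
    detPerp F = detPerp f₁ * detPerp f₂ := by
  obtain rfl : F = withLpMap 2 (f₁.prodMap f₂) := ext fun u => congrArg (WithLp.toLp 2) (hF u)
  set g₁ := adjoint f₁ ∘ₗ f₁
  set g₂ := adjoint f₂ ∘ₗ f₂
  have hG : adjoint (withLpMap 2 (f₁.prodMap f₂)) ∘ₗ withLpMap 2 (f₁.prodMap f₂) =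
      withLpMap 2 (g₁.prodMap g₂) := by
    rw [adjoint_withLpMap_prodMap, ← withLpMap_comp, prodMap_comp]
  set K := ((ker g₁)ᗮ.prod (ker g₂)ᗮ).comap (WithLp.linearEquiv 2 ℝ (U₁ × U₂)).toLinearMap
  have hK : (ker (adjoint (withLpMap 2 (f₁.prodMap f₂)) ∘ₗ withLpMap 2 (f₁.prodMap f₂)))ᗮ = K := by
    rw [hG, ker_withLpMap_prodMap, WithLp.orthogonal_comap_prod]
  have hmaps : ∀ x ∈ K, withLpMap 2 (g₁.prodMap g₂) x ∈ K := fun x _ =>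
    ⟨adjoint_comp_self_mem_orthogonal_ker f₁ x.ofLp.1,
      adjoint_comp_self_mem_orthogonal_ker f₂ x.ofLp.2⟩
  rw [detPerp_eq_sqrt_det_restrict, detPerp_eq_sqrt_det_restrict, detPerp_eq_sqrt_det_restrict,
    det_restrict_congr hG hK _ hmaps, det_restrict_withLpMap_prodMap,
    Real.sqrt_mul ((isPositive_adjoint_comp_self f₁).restrict_invariant _).det_nonneg]
end

section
/- Let f : V → W be a linear map of finite-dimensional real inner product spaces and let λ ≥ 0. Then the supremum of dim(L) over all linear subspaces L ⊆ V such that ‖f(v)‖ ≤ λ·‖v‖ holds for every v ∈ L equals F(f)(λ), the sum of the dimensions of the eigenspaces of the selfadjoint positive operator f*f : V → V for eigenvalues μ with μ ≤ λ². -/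
open Module Finset RealInnerProductSpace

/-!
Diagonalise `T = f* ∘ f` in an orthonormal eigenbasis `b` with eigenvalues `α`, so that
`‖f v‖² = ⟪T v, v⟫ = ∑ α i ⟪b i, v⟫²` and `‖v‖² = ∑ ⟪b i, v⟫²`. On the span of the `b i` with
`α i ≤ λ²` the inequality `‖f v‖ ≤ λ‖v‖` holds, and that span has dimension `F(f)(λ)`. On the span
of the remaining `b i` it fails for every `v ≠ 0`, so an admissible `L` meets this complementary
span trivially and its dimension is at most `F(f)(λ)`.
-/

namespace OrthonormalBasis

variable {ι 𝕜 E : Type*} [Fintype ι] [RCLike 𝕜] [NormedAddCommGroup E] [InnerProductSpace 𝕜 E]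

theorem finrank_span_image_finset (b : OrthonormalBasis ι 𝕜 E) (s : Finset ι) :
    finrank 𝕜 (Submodule.span 𝕜 (b '' s)) = #s := by
  have hli : LinearIndependent 𝕜 fun i : s => b i :=
    (b.orthonormal.comp _ Subtype.val_injective).linearIndependent
  rw [show b '' s = Set.range fun i : s => b i from Set.image_eq_range _ _,
    finrank_span_eq_card hli, Fintype.card_coe]

theorem inner_eq_zero_of_mem_span_image (b : OrthonormalBasis ι 𝕜 E) {s : Set ι} {i : ι}
    (hi : i ∉ s) {v : E} (hv : v ∈ Submodule.span 𝕜 (b '' s)) : inner 𝕜 (b i) v = 0 := by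
  refine Submodule.mem_orthogonal_singleton_iff_inner_right.1 (Submodule.span_le.2 ?_ hv)
  rintro _ ⟨j, hj, rfl⟩
  exact Submodule.mem_orthogonal_singleton_iff_inner_right.2
    (b.orthonormal.2 (ne_of_mem_of_not_mem hj hi).symm)

theorem sum_sq_inner_right_of_mem_span_image {E : Type*} [NormedAddCommGroup E]
    [InnerProductSpace ℝ E] (b : OrthonormalBasis ι ℝ E) {s : Finset ι} {v : E}
    (hv : v ∈ Submodule.span ℝ (b '' s)) : ∑ i ∈ s, ⟪b i, v⟫ ^ 2 = ‖v‖ ^ 2 := by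
  rw [← b.sum_sq_inner_right, sum_subset (subset_univ s)]
  intro i _ hi
  rw [b.inner_eq_zero_of_mem_span_image hi hv, sq, mul_zero]

end OrthonormalBasis

theorem LinearMap.norm_apply_le_mul_norm_iff_inner_adjoint_comp_self {V W : Type*}
    [NormedAddCommGroup V] [InnerProductSpace ℝ V] [FiniteDimensional ℝ V]
    [NormedAddCommGroup W] [InnerProductSpace ℝ W] [FiniteDimensional ℝ W]
    (f : V →ₗ[ℝ] W) {c : ℝ} (hc : 0 ≤ c) (v : V) :
    ‖f v‖ ≤ c * ‖v‖ ↔ ⟪(adjoint f ∘ₗ f) v, v⟫ ≤ c ^ 2 * ‖v‖ ^ 2 := by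
  rw [comp_apply, adjoint_inner_left, real_inner_self_eq_norm_sq, ← mul_pow,
    pow_le_pow_iff_left₀ (norm_nonneg _) (by positivity) two_ne_zero]

namespace LinearMap.IsSymmetric

variable {V : Type*} [NormedAddCommGroup V] [InnerProductSpace ℝ V] [FiniteDimensional ℝ V]
  {T : V →ₗ[ℝ] V} (hT : T.IsSymmetric) {n : ℕ} (hn : finrank ℝ V = n)

theorem inner_apply_self_eq_sum_of_mem_span {s : Finset (Fin n)} {v : V}
    (hv : v ∈ Submodule.span ℝ (hT.eigenvectorBasis hn '' s)) :
    ⟪T v, v⟫ = ∑ i ∈ s, hT.eigenvalues hn i * ⟪hT.eigenvectorBasis hn i, v⟫ ^ 2 := by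
  rw [sum_subset (subset_univ s) fun i _ hi => by
      rw [(hT.eigenvectorBasis hn).inner_eq_zero_of_mem_span_image hi hv, sq, mul_zero, mul_zero],
    ← (hT.eigenvectorBasis hn).sum_inner_mul_inner]
  refine sum_congr rfl fun i _ => ?_
  rw [hT, hT.apply_eigenvectorBasis, real_inner_smul_right, real_inner_comm,
    RCLike.ofReal_real_eq_id, id_eq]
  ring

theorem inner_apply_self_le_of_mem_span {s : Finset (Fin n)} {c : ℝ}
    (hs : ∀ i ∈ s, hT.eigenvalues hn i ≤ c) {v : V}
    (hv : v ∈ Submodule.span ℝ (hT.eigenvectorBasis hn '' s)) :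
    ⟪T v, v⟫ ≤ c * ‖v‖ ^ 2 := by
  rw [hT.inner_apply_self_eq_sum_of_mem_span hn hv,
    ← (hT.eigenvectorBasis hn).sum_sq_inner_right_of_mem_span_image hv, mul_sum]
  exact sum_le_sum fun i hi => mul_le_mul_of_nonneg_right (hs i hi) (sq_nonneg _)

theorem lt_inner_apply_self_of_mem_span {s : Finset (Fin n)} {c : ℝ}
    (hs : ∀ i ∈ s, c < hT.eigenvalues hn i) {v : V}
    (hv : v ∈ Submodule.span ℝ (hT.eigenvectorBasis hn '' s)) (hv0 : v ≠ 0) :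
    c * ‖v‖ ^ 2 < ⟪T v, v⟫ := by
  have hnorm := (hT.eigenvectorBasis hn).sum_sq_inner_right_of_mem_span_image hv
  obtain ⟨i, hi, hvi⟩ : ∃ i ∈ s, ⟪hT.eigenvectorBasis hn i, v⟫ ≠ 0 := by
    by_contra! h
    rw [sum_eq_zero fun i hi => by rw [h i hi, sq, mul_zero]] at hnorm
    exact hv0 (norm_eq_zero.1 (pow_eq_zero_iff two_ne_zero |>.1 hnorm.symm))
  rw [hT.inner_apply_self_eq_sum_of_mem_span hn hv, ← hnorm, mul_sum]
  exact sum_lt_sum (fun j hj => mul_le_mul_of_nonneg_right (hs j hj).le (sq_nonneg _))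
    ⟨i, hi, mul_lt_mul_of_pos_right (hs i hi) (by positivity)⟩

theorem sSup_finrank_inner_apply_self_le_eq_card (c : ℝ) :
    sSup {d : ℕ | ∃ L : Submodule ℝ V, (∀ v ∈ L, ⟪T v, v⟫ ≤ c * ‖v‖ ^ 2) ∧ d = finrank ℝ L}
      = #{i | hT.eigenvalues hn i ≤ c} := by
  set b := hT.eigenvectorBasis hn
  have hlow : ∀ v ∈ Submodule.span ℝ (b '' ↑({i | hT.eigenvalues hn i ≤ c} : Finset _)),
      ⟪T v, v⟫ ≤ c * ‖v‖ ^ 2 := fun v hv =>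
    hT.inner_apply_self_le_of_mem_span hn (fun i hi => (mem_filter.1 hi).2) hv
  refine IsGreatest.csSup_eq ⟨⟨_, hlow, (b.finrank_span_image_finset _).symm⟩, ?_⟩
  rintro _ ⟨L, hL, rfl⟩
  have hdisj :
      Disjoint L (Submodule.span ℝ (b '' ↑({i | ¬hT.eigenvalues hn i ≤ c} : Finset _))) := by
    refine Submodule.disjoint_def.2 fun v hvL hv => ?_
    by_contra hv0
    exact (hT.lt_inner_apply_self_of_mem_span hn (fun i hi => not_le.1 (mem_filter.1 hi).2) hv
      hv0).not_ge (hL v hvL)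
  have hdim := Submodule.finrank_add_finrank_le_of_disjoint hdisj
  have hcard := card_filter_add_card_filter_not (s := univ) (hT.eigenvalues hn · ≤ c)
  rw [b.finrank_span_image_finset, hn] at hdim
  rw [card_univ, Fintype.card_fin] at hcard
  omega

theorem finsum_finrank_eigenspace_le_eq_card (c : ℝ) :
    ∑ᶠ (μ : ℝ) (_ : μ ≤ c), finrank ℝ (Module.End.eigenspace T μ)
      = #{i | hT.eigenvalues hn i ≤ c} := by
  rw [finsum_cond_eq_sum_of_cond_iff _
      (t := ({i | hT.eigenvalues hn i ≤ c} : Finset _).image (hT.eigenvalues hn)),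
    card_eq_sum_card_image (hT.eigenvalues hn)]
  · refine sum_congr rfl fun μ hμ => ?_
    obtain ⟨i, hi, rfl⟩ := mem_image.1 hμ
    rw [← hT.card_filter_eigenvalues_eq hn, filter_filter]
    refine congrArg card (filter_congr fun j _ => ?_)
    rw [RCLike.ofReal_real_eq_id, id_eq, iff_and_self]
    exact fun h => h ▸ (mem_filter.1 hi).2
  · intro μ hμ
    rw [← hT.card_filter_eigenvalues_eq hn] at hμ
    obtain ⟨i, hi⟩ := card_ne_zero.1 hμ
    rw [mem_filter, RCLike.ofReal_real_eq_id, id_eq] at hi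
    rw [← hi.2, mem_image]
    exact ⟨fun h => ⟨i, mem_filter.2 ⟨mem_univ i, h⟩, rfl⟩,
      fun ⟨j, hj, hji⟩ => hji ▸ (mem_filter.1 hj).2⟩

end LinearMap.IsSymmetric

/-- Spectral density: for a linear map `f : V → W` of finite-dimensional real inner
product spaces and `λ ≥ 0`, the supremum of `dim L` over all subspaces `L ⊆ V` with
`‖f v‖ ≤ λ‖v‖` for all `v ∈ L` equals
`F(f)(λ) = Σ_{μ ≤ λ²} dim E_μ(f*f)`, the sum of the dimensions of the eigenspaces of
`f* ∘ f` for eigenvalues `μ ≤ λ²`. -/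
theorem spectralDensity_eq_sup_dim {V W : Type*}
    [NormedAddCommGroup V] [InnerProductSpace ℝ V] [FiniteDimensional ℝ V]
    [NormedAddCommGroup W] [InnerProductSpace ℝ W] [FiniteDimensional ℝ W]
    (f : V →ₗ[ℝ] W) (lam : ℝ) (hlam : 0 ≤ lam) :
    sSup {d : ℕ | ∃ L : Submodule ℝ V, (∀ v ∈ L, ‖f v‖ ≤ lam * ‖v‖) ∧ d = Module.finrank ℝ L}
      = ∑ᶠ (mu : ℝ) (_ : mu ≤ lam ^ 2),
          Module.finrank ℝ (Module.End.eigenspace (LinearMap.adjoint f ∘ₗ f) mu) := by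
  have hT := LinearMap.isSymmetric_adjoint_comp_self f
  rw [hT.finsum_finrank_eigenspace_le_eq_card rfl,
    ← hT.sSup_finrank_inner_apply_self_le_eq_card rfl]
  simp_rw [f.norm_apply_le_mul_norm_iff_inner_adjoint_comp_self hlam]
end

section
/- Let f : V → W be a nonzero linear map of finite-dimensional real inner product spaces, and define ζ_f(s) = Σ_{λ ∈ spec(f*f), λ > 0} μ(f*f)(λ) · λ^{-s} for real s, where the (finite) sum runs over the positive eigenvalues λ of f*f with multiplicity μ(f*f)(λ). Then ζ_f is differentiable and its derivative at s = 0 satisfies (d/ds)|_{s=0} ζ_f(s) = -2 · ln(det⊥(f)). -/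
/-!
In an orthonormal eigenbasis of `f* ∘ f`, with eigenvalues `μ i ≥ 0` counted with multiplicity,
`ζ_f(s) = ∑_{μ i > 0} μ i ^ (-s)`, so `ζ_f'(0) = -∑_{μ i > 0} log (μ i)`. The eigenvectors with
`μ i ≠ 0` lie in `range (f* ∘ f) = (ker (f* ∘ f))ᗮ` and, by counting dimensions, form a basis of
it in which the compression of `f* ∘ f` is diagonal; hence `det⊥(f) ^ 2 = ∏_{μ i > 0} μ i`.
-/

open LinearMap Module Module.End Finset

theorem finsum_card_fiber_smul {ι α M : Type*} [Fintype ι] [DecidableEq α] [AddCommMonoid M]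
    (μ : ι → α) (φ : α → M) :
    ∑ᶠ a, #{i | μ i = a} • φ a = ∑ i, φ (μ i) := by
  rw [sum_comp, finsum_eq_finsetSum_of_support_subset _ (s := univ.image μ)]
  intro a ha
  obtain ⟨i, hi⟩ := card_ne_zero.mp (left_ne_zero_of_smul ha)
  simp only [mem_filter, mem_univ, true_and] at hi
  simp [← hi]

theorem LinearMap.det_eq_prod_of_apply_basis_eq_smul {R M ι : Type*} [CommRing R]
    [AddCommGroup M] [Module R M] [Fintype ι] [DecidableEq ι] (b : Basis ι R M)
    {T : M →ₗ[R] M} {c : ι → R} (h : ∀ i, T (b i) = c i • b i) : LinearMap.det T = ∏ i, c i := by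
  have : toMatrix b b T = Matrix.diagonal c := by
    ext i j
    rw [toMatrix_apply, h, map_smul, b.repr_self, Matrix.diagonal_apply]
    by_cases hij : i = j <;> simp [hij]
  rw [← det_toMatrix b, this, Matrix.det_diagonal]

section IsSymmetric

variable {𝕜 E : Type*} [RCLike 𝕜] [NormedAddCommGroup E] [InnerProductSpace 𝕜 E]
  [FiniteDimensional 𝕜 E] {T : E →ₗ[𝕜] E} {n : ℕ}

namespace LinearMap.IsSymmetric

theorem finsum_finrank_eigenspace_smul {M : Type*} [AddCommMonoid M] (hT : T.IsSymmetric)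
    (hn : finrank 𝕜 E = n) (φ : 𝕜 → M) :
    ∑ᶠ μ, finrank 𝕜 (eigenspace T μ) • φ μ = ∑ i, φ (hT.eigenvalues hn i) := by
  classical
  simp_rw [← hT.card_filter_eigenvalues_eq hn]
  exact finsum_card_fiber_smul _ φ

theorem orthogonal_ker (hT : T.IsSymmetric) : (ker T)ᗮ = range T := by
  rw [← hT.orthogonal_range, Submodule.orthogonal_orthogonal]

theorem finrank_orthogonal_ker (hT : T.IsSymmetric) (hn : finrank 𝕜 E = n) :
    finrank 𝕜 (ker T)ᗮ = #{i | hT.eigenvalues hn i ≠ 0} := by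
  subst hn
  have hsum := (ker T).finrank_add_finrank_orthogonal
  have hsplit := card_filter_add_card_filter_not (s := univ)
    fun i => (hT.eigenvalues rfl i : 𝕜) = 0
  have hne : #{i | ¬(hT.eigenvalues rfl i : 𝕜) = 0} = #{i | hT.eigenvalues rfl i ≠ 0} := by
    congr 1; ext; simp
  have hker : finrank 𝕜 (ker T) = #{i | (hT.eigenvalues rfl i : 𝕜) = 0} := by
    rw [← eigenspace_zero, hT.card_filter_eigenvalues_eq rfl]
  rw [card_univ, Fintype.card_fin] at hsplit
  omega

theorem det_compress_orthogonal_ker (hT : T.IsSymmetric) (hn : finrank 𝕜 E = n) :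
    LinearMap.det ((ker T)ᗮ.orthogonalProjectionOnto.toLinearMap ∘ₗ T ∘ₗ (ker T)ᗮ.subtype) =
      ∏ i with hT.eigenvalues hn i ≠ 0, (hT.eigenvalues hn i : 𝕜) := by
  set K := (ker T)ᗮ with hK
  set b := hT.eigenvectorBasis hn
  set μ := hT.eigenvalues hn
  have hmem (i : {i // μ i ≠ 0}) : b i ∈ K := by
    rw [hK, hT.orthogonal_ker]
    refine ⟨(μ i : 𝕜)⁻¹ • b i, ?_⟩
    rw [map_smul, hT.apply_eigenvectorBasis, smul_smul, inv_mul_cancel₀ (by simpa using i.2),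
      one_smul]
  let v (i : {i // μ i ≠ 0}) : K := ⟨b i, hmem i⟩
  have hv : LinearIndependent 𝕜 v := LinearIndependent.of_comp K.subtype
    (b.orthonormal.linearIndependent.comp _ Subtype.val_injective)
  have hcard : Fintype.card {i // μ i ≠ 0} = finrank 𝕜 K := by
    rw [hT.finrank_orthogonal_ker hn, Fintype.card_subtype]
  rw [det_eq_prod_of_apply_basis_eq_smul (basisOfLinearIndependentOfCardEqFinrank' v hv hcard)
    (c := fun i => (μ i : 𝕜)),
    prod_subtype (p := fun i => μ i ≠ 0) _ (fun _ => by simp) fun i => (μ i : 𝕜)]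
  intro i
  rw [coe_basisOfLinearIndependentOfCardEqFinrank']
  change K.orthogonalProjectionOnto (T (b i)) = (μ i : 𝕜) • v i
  rw [hT.apply_eigenvectorBasis, map_smul]
  exact congrArg _ (K.orthogonalProjectionOnto_mem_subspace_eq_self (v i))

theorem finsum_pos_finrank_eigenspace_mul {F : Type*} [NormedAddCommGroup F]
    [InnerProductSpace ℝ F] [FiniteDimensional ℝ F] {S : F →ₗ[ℝ] F} (hS : S.IsSymmetric)
    (hn : finrank ℝ F = n) (φ : ℝ → ℝ) :
    ∑ᶠ (μ : ℝ) (_ : 0 < μ), (finrank ℝ (eigenspace S μ) : ℝ) * φ μ =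
      ∑ i with 0 < hS.eigenvalues hn i, φ (hS.eigenvalues hn i) := by
  have := hS.finsum_finrank_eigenspace_smul hn fun μ => if 0 < μ then φ μ else 0
  simp only [RCLike.ofReal_real_eq_id, id_eq, smul_ite, smul_zero, nsmul_eq_mul] at this
  rw [sum_filter, ← this]
  exact finsum_congr fun μ => finsum_eq_if

end LinearMap.IsSymmetric

end IsSymmetric

theorem hasDerivAt_sum_rpow_neg {ι : Type*} (s : Finset ι) {c : ι → ℝ}
    (hc : ∀ i ∈ s, 0 < c i) (x : ℝ) :
    HasDerivAt (fun t => ∑ i ∈ s, c i ^ (-t)) (-∑ i ∈ s, c i ^ (-x) * Real.log (c i)) x := by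
  rw [← sum_neg_distrib]
  refine HasDerivAt.fun_sum fun i hi => ?_
  exact ((Real.hasStrictDerivAt_const_rpow (hc i hi) (-x)).hasDerivAt.comp x
    (hasDerivAt_neg x)).congr_deriv (by ring)

theorem detPerp_eq_sqrt_prod_pos_eigenvalues {V W : Type*} [NormedAddCommGroup V]
    [InnerProductSpace ℝ V] [FiniteDimensional ℝ V] [NormedAddCommGroup W]
    [InnerProductSpace ℝ W] [FiniteDimensional ℝ W] (f : V →ₗ[ℝ] W) (hf : f ≠ 0) :
    detPerp f = √(∏ i with 0 < f.isSymmetric_adjoint_comp_self.eigenvalues rfl i,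
      f.isSymmetric_adjoint_comp_self.eigenvalues rfl i) := by
  have hpos (i) : 0 < f.isSymmetric_adjoint_comp_self.eigenvalues rfl i ↔
      f.isSymmetric_adjoint_comp_self.eigenvalues rfl i ≠ 0 :=
    (f.isPositive_adjoint_comp_self.nonneg_eigenvalues rfl i).lt_iff_ne'
  rw [detPerp, if_neg hf, f.isSymmetric_adjoint_comp_self.det_compress_orthogonal_ker rfl]
  simp_rw [hpos, RCLike.ofReal_real_eq_id, id_eq]

/-- For a nonzero linear map `f : V → W` of finite-dimensional real inner product spaces,
the zeta function `ζ_f(s) = Σ_{λ ∈ spec(f*f), λ > 0} μ(f*f)(λ) · λ^{-s}` is differentiable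
and `(d/ds)|_{s=0} ζ_f(s) = -2 · ln(det⊥(f))`. -/
theorem zeta_deriv_at_zero {V W : Type*}
    [NormedAddCommGroup V] [InnerProductSpace ℝ V] [FiniteDimensional ℝ V]
    [NormedAddCommGroup W] [InnerProductSpace ℝ W] [FiniteDimensional ℝ W]
    (f : V →ₗ[ℝ] W) (hf : f ≠ 0)
    (zeta : ℝ → ℝ)
    (hzeta : ∀ s : ℝ, zeta s = ∑ᶠ (lam : ℝ) (_ : 0 < lam),
      (Module.finrank ℝ (Module.End.eigenspace (LinearMap.adjoint f ∘ₗ f) lam) : ℝ)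
        * lam ^ (-s)) :
    Differentiable ℝ zeta ∧ deriv zeta 0 = -2 * Real.log (detPerp f) := by
  set μ := f.isSymmetric_adjoint_comp_self.eigenvalues rfl
  have hpos : ∀ i ∈ ({i | 0 < μ i} : Finset _), 0 < μ i := fun i hi => (mem_filter.mp hi).2
  have hzeta' : zeta = fun s => ∑ i with 0 < μ i, μ i ^ (-s) := funext fun s =>
    (hzeta s).trans (f.isSymmetric_adjoint_comp_self.finsum_pos_finrank_eigenspace_mul rfl _)
  have hderiv (x : ℝ) := hzeta' ▸ hasDerivAt_sum_rpow_neg _ hpos x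
  refine ⟨fun x => (hderiv x).differentiableAt, ?_⟩
  rw [(hderiv 0).deriv, detPerp_eq_sqrt_prod_pos_eigenvalues f hf,
    Real.log_sqrt (prod_nonneg fun i hi => (hpos i hi).le),
    Real.log_prod fun i hi => (hpos i hi).ne']
  simp only [neg_zero, Real.rpow_zero, one_mul]
  ring
end

section
/- Let Δ : V → V be a positive selfadjoint endomorphism of a finite-dimensional real inner product space V. Then the trace of the heat operator e^{-tΔ} (the operator exponential of -t·Δ) converges as t → ∞ to the dimension of ker(Δ): lim_{t→∞} tr(e^{-tΔ}) = dim(ker Δ). -/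
/-!
In an orthonormal eigenbasis of `Δ`, with eigenvalues `μᵢ ≥ 0`, the heat operator `e^{-tΔ}` is
diagonal with entries `e^{-tμᵢ}`, so its trace is `∑ᵢ e^{-tμᵢ}`. As `t → ∞` each term tends to
`1` if `μᵢ = 0` and to `0` otherwise, and the number of zero eigenvalues, counted with
multiplicity, is the dimension of the eigenspace for `0`, i.e. of `ker Δ`.
-/

open Filter Topology NormedSpace Finset

theorem ContinuousLinearMap.exp_apply_of_apply_eq_smul {𝕂 E : Type*} [RCLike 𝕂]
    [NormedAddCommGroup E] [NormedSpace 𝕂 E] [CompleteSpace E]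
    {A : E →L[𝕂] E} {v : E} {c : 𝕂} (h : A v = c • v) : exp A v = exp c • v := by
  have hpow : ∀ n : ℕ, (A ^ n) v = c ^ n • v := by
    intro n
    induction n with
    | zero => simp
    | succ n ih => rw [pow_succ, mul_def, comp_apply, h, map_smul, ih, smul_smul, pow_succ']
  have hA := (exp_series_hasSum_exp' (𝕂 := 𝕂) A).mapL (apply 𝕂 E v)
  have hc := (exp_series_hasSum_exp' (𝕂 := 𝕂) c).smul_const v
  simp only [apply_apply, smul_apply, hpow, smul_smul, smul_eq_mul] at hA hc
  exact hA.unique hc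

theorem LinearMap.trace_exp_eq_sum_exp {𝕂 E ι : Type*} [RCLike 𝕂]
    [NormedAddCommGroup E] [NormedSpace 𝕂 E] [FiniteDimensional 𝕂 E] [Fintype ι] [DecidableEq ι]
    (b : Module.Basis ι 𝕂 E) {A : E →L[𝕂] E} {μ : ι → 𝕂} (h : ∀ i, A (b i) = μ i • b i) :
    LinearMap.trace 𝕂 E (exp A : E →L[𝕂] E) = ∑ i, exp (μ i) := by
  have := FiniteDimensional.complete 𝕂 E
  rw [LinearMap.trace_eq_matrix_trace 𝕂 b, Matrix.trace]
  refine Finset.sum_congr rfl fun i _ => ?_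
  rw [Matrix.diag_apply, LinearMap.toMatrix_apply, ContinuousLinearMap.coe_coe,
    ContinuousLinearMap.exp_apply_of_apply_eq_smul (h i), map_smul, b.repr_self]
  simp

theorem Real.tendsto_sum_exp_neg_mul_atTop {ι : Type*} [Fintype ι] {μ : ι → ℝ}
    (hμ : ∀ i, 0 ≤ μ i) :
    Tendsto (fun t => ∑ i, Real.exp (-t * μ i)) atTop (𝓝 (#{i | μ i = 0} : ℕ)) := by
  rw [Finset.natCast_card_filter]
  refine tendsto_finsetSum _ fun i _ => ?_
  rcases (hμ i).eq_or_lt with hi | hi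
  · simp [← hi]
  · simp only [hi.ne', if_false, neg_mul]
    exact Real.tendsto_exp_neg_atTop_nhds_zero.comp (tendsto_id.atTop_mul_const hi)

open RealInnerProductSpace in
/-- Let `Δ : V → V` be a positive selfadjoint endomorphism of a finite-dimensional real
inner product space.  Then the trace of the heat operator `e^{-tΔ}` converges, as
`t → ∞`, to the dimension of `ker Δ`. -/
theorem trace_heat_operator_tendsto {V : Type*}
    [NormedAddCommGroup V] [InnerProductSpace ℝ V] [FiniteDimensional ℝ V]
    (Δ : V →ₗ[ℝ] V)
    (hsa : ∀ x y : V, ⟪Δ x, y⟫ = ⟪x, Δ y⟫)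
    (hpos : ∀ v : V, 0 ≤ ⟪Δ v, v⟫) :
    Filter.Tendsto
      (fun t : ℝ => LinearMap.trace ℝ V
        ((NormedSpace.exp ((-t) • (LinearMap.toContinuousLinearMap Δ)) : V →L[ℝ] V)
          : V →ₗ[ℝ] V))
      Filter.atTop
      (nhds ((Module.finrank ℝ ↥(LinearMap.ker Δ) : ℝ))) := by
  have hΔ : Δ.IsSymmetric := hsa
  have hμ : ∀ i, 0 ≤ hΔ.eigenvalues rfl i := fun i =>
    eigenvalue_nonneg_of_nonneg (hΔ.hasEigenvalue_eigenvalues rfl i) fun v => by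
      simpa [real_inner_comm] using hpos v
  have htrace (t : ℝ) : LinearMap.trace ℝ V
      ((exp ((-t) • (LinearMap.toContinuousLinearMap Δ)) : V →L[ℝ] V) : V →ₗ[ℝ] V) =
      ∑ i, Real.exp (-t * hΔ.eigenvalues rfl i) := by
    simp_rw [Real.exp_eq_exp_ℝ]
    refine LinearMap.trace_exp_eq_sum_exp (hΔ.eigenvectorBasis rfl).toBasis fun i => ?_
    simp [hΔ.apply_eigenvectorBasis, smul_smul]
  rw [← Module.End.eigenspace_zero, ← hΔ.card_filter_eigenvalues_eq rfl]
  simp only [RCLike.ofReal_real_eq_id, id]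
  simpa only [htrace] using Real.tendsto_sum_exp_neg_mul_atTop hμ
end
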